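/- arXiv:1902.03041 — 5 statements merged into one kernel-verified Lean document; each statement's English description precedes it below -/
import Mathlib

section
/- If a nonnegative random variable X satisfies P(X > t) ~ K t^{-α} as t → ∞ with α > 1, then the Conditional Tail Expectation CoTE_{1-γ}(X) := E[X | X > VaR_{1-γ}(X)] satisfies CoTE_{1-γ}(X) ~ (α/(α-1)) K^{1/α} γ^{-1/α} as γ → 0. -/
/-!
Write `F t = P(X > t)`, so that `VaR_{1-γ}` is the generalized inverse `v γ` of `F`. Since
`F t ~ K t^{-α}`, the point `c γ^{-1/α}` lies beyond `v γ` when `c > K^{1/α}` and before it when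
`c < K^{1/α}`, for all small `γ`; hence `v γ ~ (K / γ)^{1/α}`. The layer-cake formula gives
`E[X; X > w] = w F w + ∫_w^∞ F`, and integrating the tail asymptotics gives
`∫_w^∞ F ~ w F w / (α - 1)`. So
`CoTE_{1-γ} = v (1 + ∫_v^∞ F / (v F v)) ~ (α / (α - 1)) (K / γ)^{1/α}`.
-/

open MeasureTheory Filter Set

/-- Value-at-Risk at confidence level `1 - γ`. -/
noncomputable def VaR {Ω : Type*} [MeasurableSpace Ω] (ℙ : Measure Ω)
    (X : Ω → ℝ) (γ : ℝ) : ℝ :=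
  sInf {t : ℝ | 0 ≤ t ∧ (ℙ {ω | X ω > t}).toReal ≤ γ}

/-- Conditional Tail Expectation: `CoTE_{1-γ}(X) = E[X | X > VaR_{1-γ}(X)]`. -/
noncomputable def CoTE {Ω : Type*} [MeasurableSpace Ω] (ℙ : Measure Ω)
    (X : Ω → ℝ) (γ : ℝ) : ℝ :=
  (∫ ω in {ω | X ω > VaR ℙ X γ}, X ω ∂ℙ) / (ℙ {ω | X ω > VaR ℙ X γ}).toReal

open Topology

/-- `VaR ℙ X` is, by definition, `tailQuantile (fun t => (ℙ {ω | X ω > t}).toReal)`. -/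
noncomputable def tailQuantile (F : ℝ → ℝ) (γ : ℝ) : ℝ :=
  sInf {t : ℝ | 0 ≤ t ∧ F t ≤ γ}

namespace tailQuantile

variable {F : ℝ → ℝ} {K α γ t : ℝ}

lemma nonneg (F : ℝ → ℝ) (γ : ℝ) : 0 ≤ tailQuantile F γ :=
  Real.sInf_nonneg fun _ ht => ht.1

lemma le_of_apply_le (ht : 0 ≤ t) (hFt : F t ≤ γ) : tailQuantile F γ ≤ t :=
  csInf_le ⟨0, fun _ hs => hs.1⟩ ⟨ht, hFt⟩

lemma le_of_lt_apply (hF : Antitone F) (hne : ∃ s, 0 ≤ s ∧ F s ≤ γ) (hFt : γ < F t) :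
    t ≤ tailQuantile F γ :=
  le_csInf hne fun _ hs => le_of_not_gt fun hst => (hFt.trans_le (hF hst.le)).not_ge hs.2

lemma tendsto_apply_div_rpow_div (hα : 0 < α) (h : Tendsto (fun t => t ^ α * F t) atTop (𝓝 K))
    {c : ℝ} (hc : 0 < c) :
    Tendsto (fun γ => F (c / γ ^ (1 / α)) / γ) (𝓝[>] 0) (𝓝 (K / c ^ α)) := by
  have hto : Tendsto (fun γ : ℝ => c / γ ^ (1 / α)) (𝓝[>] 0) atTop := by
    refine ((tendsto_rpow_neg_nhdsGT_zero (neg_lt_zero.2 (one_div_pos.2 hα))).const_mul_atTop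
      hc).congr' ?_
    filter_upwards [self_mem_nhdsWithin] with γ (hγ : 0 < γ)
    rw [Real.rpow_neg hγ.le, ← div_eq_mul_inv]
  refine ((h.comp hto).div_const (c ^ α)).congr' ?_
  filter_upwards [self_mem_nhdsWithin] with γ (hγ : 0 < γ)
  have hroot : (γ ^ (1 / α)) ^ α = γ := by rw [one_div, Real.rpow_inv_rpow hγ.le hα.ne']
  simp only [Function.comp_apply]
  rw [Real.div_rpow hc.le (Real.rpow_nonneg hγ.le _), hroot]
  field_simp

lemma eventually_apply_le (hα : 0 < α) (h : Tendsto (fun t => t ^ α * F t) atTop (𝓝 K))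
    {c : ℝ} (hc0 : 0 < c) (hc : K < c ^ α) : ∀ᶠ γ in 𝓝[>] 0, F (c / γ ^ (1 / α)) ≤ γ := by
  have hlt : K / c ^ α < 1 := (div_lt_one (Real.rpow_pos_of_pos hc0 _)).2 hc
  filter_upwards [(tendsto_apply_div_rpow_div hα h hc0).eventually_lt_const hlt,
    self_mem_nhdsWithin] with γ hγc (hγ : 0 < γ)
  exact ((div_lt_one hγ).1 hγc).le

lemma eventually_rpow_mul_le (hK : 0 ≤ K) (hα : 0 < α)
    (h : Tendsto (fun t => t ^ α * F t) atTop (𝓝 K)) {c : ℝ} (hc : K ^ (1 / α) < c) :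
    ∀ᶠ γ in 𝓝[>] 0, γ ^ (1 / α) * tailQuantile F γ ≤ c := by
  have hc0 : 0 < c := (Real.rpow_nonneg hK _).trans_lt hc
  have hKc : K < c ^ α := by rwa [one_div, Real.rpow_inv_lt_iff_of_pos hK hc0.le hα] at hc
  filter_upwards [eventually_apply_le hα h hc0 hKc, self_mem_nhdsWithin] with γ hFγ (hγ : 0 < γ)
  have hγα : 0 < γ ^ (1 / α) := Real.rpow_pos_of_pos hγ _
  calc γ ^ (1 / α) * tailQuantile F γ ≤ γ ^ (1 / α) * (c / γ ^ (1 / α)) := by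
        gcongr; exact le_of_apply_le (by positivity) hFγ
    _ = c := mul_div_cancel₀ _ hγα.ne'

lemma eventually_le_rpow_mul (hF : Antitone F) (hK : 0 < K) (hα : 0 < α)
    (h : Tendsto (fun t => t ^ α * F t) atTop (𝓝 K)) {c : ℝ} (hc : c < K ^ (1 / α)) :
    ∀ᶠ γ in 𝓝[>] 0, c ≤ γ ^ (1 / α) * tailQuantile F γ := by
  rcases le_or_gt c 0 with hc0 | hc0
  · filter_upwards [self_mem_nhdsWithin] with γ (hγ : 0 < γ)
    exact hc0.trans (mul_nonneg (Real.rpow_nonneg hγ.le _) (nonneg F γ))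
  have hlt : 1 < K / c ^ α := by
    rwa [one_lt_div (Real.rpow_pos_of_pos hc0 _), ← Real.lt_rpow_inv_iff_of_pos hc0.le hK.le hα,
      ← one_div]
  have hc' : 0 < K ^ (1 / α) + 1 := by positivity
  have hKc' : K < (K ^ (1 / α) + 1) ^ α := by
    rw [← Real.rpow_inv_lt_iff_of_pos hK.le hc'.le hα, ← one_div]
    exact lt_add_one _
  filter_upwards [(tendsto_apply_div_rpow_div hα h hc0).eventually_const_lt hlt,
    eventually_apply_le hα h hc' hKc', self_mem_nhdsWithin] with γ hγc hγne (hγ : 0 < γ)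
  have hγα : 0 < γ ^ (1 / α) := Real.rpow_pos_of_pos hγ _
  calc c = γ ^ (1 / α) * (c / γ ^ (1 / α)) := (mul_div_cancel₀ _ hγα.ne').symm
    _ ≤ γ ^ (1 / α) * tailQuantile F γ := by
        gcongr
        exact le_of_lt_apply hF ⟨_, by positivity, hγne⟩ ((one_lt_div hγ).1 hγc)

theorem tendsto_rpow_mul (hF : Antitone F) (hK : 0 < K) (hα : 0 < α)
    (h : Tendsto (fun t => t ^ α * F t) atTop (𝓝 K)) :
    Tendsto (fun γ => γ ^ (1 / α) * tailQuantile F γ) (𝓝[>] 0) (𝓝 (K ^ (1 / α))) := by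
  refine tendsto_order.2 ⟨fun a ha => ?_, fun b hb => ?_⟩
  · obtain ⟨c, hac, hc⟩ := exists_between ha
    exact (eventually_le_rpow_mul hF hK hα h hc).mono fun γ hγ => hac.trans_le hγ
  · obtain ⟨c, hc, hcb⟩ := exists_between hb
    exact (eventually_rpow_mul_le hK.le hα h hc).mono fun γ hγ => hγ.trans_lt hcb

theorem tendsto_atTop (hF : Antitone F) (hK : 0 < K) (hα : 0 < α)
    (h : Tendsto (fun t => t ^ α * F t) atTop (𝓝 K)) :
    Tendsto (tailQuantile F) (𝓝[>] 0) atTop := by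
  refine ((tendsto_rpow_mul hF hK hα h).pos_mul_atTop (Real.rpow_pos_of_pos hK _)
    (tendsto_rpow_neg_nhdsGT_zero (neg_lt_zero.2 (one_div_pos.2 hα)))).congr' ?_
  filter_upwards [self_mem_nhdsWithin] with γ (hγ : 0 < γ)
  rw [Real.rpow_neg hγ.le, mul_right_comm, mul_inv_cancel₀ (Real.rpow_pos_of_pos hγ _).ne', one_mul]

end tailQuantile

section TailIntegral

variable {f : ℝ → ℝ} {K α : ℝ}

lemma integral_Ioi_rpow_neg {w : ℝ} (hα : 1 < α) (hw : 0 < w) :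
    ∫ t in Ioi w, t ^ (-α) = w ^ (1 - α) / (α - 1) := by
  rw [integral_Ioi_rpow_of_lt (by linarith) hw, neg_add_eq_sub, ← neg_sub α 1, neg_div_neg_eq]

lemma eventually_abs_rpow_mul_integral_Ioi_sub_le (hf : Measurable f) (hα : 1 < α)
    (h : Tendsto (fun t => t ^ α * f t) atTop (𝓝 K)) {ε : ℝ} (hε : 0 < ε) :
    ∀ᶠ w in atTop, IntegrableOn f (Ioi w) ∧
      |(w ^ (α - 1) * ∫ t in Ioi w, f t) - K / (α - 1)| ≤ ε / (α - 1) := by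
  obtain ⟨T, hT⟩ := eventually_atTop.1 (h.eventually (Metric.closedBall_mem_nhds K hε))
  filter_upwards [eventually_gt_atTop (max T 0)] with w hw
  have hw0 : 0 < w := (le_max_right T 0).trans_lt hw
  have hpow : IntegrableOn (fun t : ℝ => t ^ (-α)) (Ioi w) :=
    integrableOn_Ioi_rpow_of_lt (by linarith) hw0
  have hdev : ∀ t ∈ Ioi w, ‖f t - K * t ^ (-α)‖ ≤ ε * t ^ (-α) := by
    intro t (ht : w < t)
    have ht0 : 0 < t := hw0.trans ht
    have hTt : dist (t ^ α * f t) K ≤ ε := hT t ((le_max_left T 0).trans (hw.trans ht).le)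
    rw [Real.dist_eq] at hTt
    have hsplit : f t - K * t ^ (-α) = t ^ (-α) * (t ^ α * f t - K) := by
      rw [mul_sub, ← mul_assoc, ← Real.rpow_add ht0, neg_add_cancel, Real.rpow_zero, one_mul,
        mul_comm]
    rw [hsplit, Real.norm_eq_abs, abs_mul, abs_of_pos (Real.rpow_pos_of_pos ht0 _), mul_comm]
    exact mul_le_mul_of_nonneg_right hTt (Real.rpow_nonneg ht0.le _)
  have hdevInt : IntegrableOn (fun t => f t - K * t ^ (-α)) (Ioi w) :=
    (hpow.const_mul ε).mono'
      ((hf.sub ((measurable_id.pow_const _).const_mul _)).aestronglyMeasurable)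
      ((ae_restrict_iff' measurableSet_Ioi).2 (Eventually.of_forall hdev))
  have hfInt : IntegrableOn f (Ioi w) := by
    simpa only [Pi.add_def, sub_add_cancel] using hdevInt.add (hpow.const_mul K)
  refine ⟨hfInt, ?_⟩
  have hint : |(∫ t in Ioi w, f t) - K * (w ^ (1 - α) / (α - 1))| ≤
      ε * (w ^ (1 - α) / (α - 1)) := by
    rw [← integral_Ioi_rpow_neg hα hw0, ← integral_const_mul, ← integral_const_mul,
      ← integral_sub hfInt (hpow.const_mul K)]
    exact norm_integral_le_of_norm_le (hpow.const_mul ε)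
      ((ae_restrict_iff' measurableSet_Ioi).2 (Eventually.of_forall hdev))
  have hw1 : w ^ (α - 1) * w ^ (1 - α) = 1 := by
    rw [← Real.rpow_add hw0, sub_add_sub_cancel', sub_self, Real.rpow_zero]
  have hwpos : 0 < w ^ (α - 1) := Real.rpow_pos_of_pos hw0 _
  calc |(w ^ (α - 1) * ∫ t in Ioi w, f t) - K / (α - 1)|
      = w ^ (α - 1) * |(∫ t in Ioi w, f t) - K * (w ^ (1 - α) / (α - 1))| := by
        rw [← abs_of_pos hwpos, ← abs_mul, abs_of_pos hwpos, mul_sub, ← mul_assoc, mul_comm _ K,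
          mul_assoc, mul_div_assoc', hw1, mul_one_div]
    _ ≤ w ^ (α - 1) * (ε * (w ^ (1 - α) / (α - 1))) := mul_le_mul_of_nonneg_left hint hwpos.le
    _ = ε / (α - 1) := by rw [mul_left_comm, mul_div_assoc', hw1, mul_one_div]

lemma eventually_integrableOn_Ioi (hf : Measurable f) (hα : 1 < α)
    (h : Tendsto (fun t => t ^ α * f t) atTop (𝓝 K)) : ∀ᶠ w in atTop, IntegrableOn f (Ioi w) :=
  (eventually_abs_rpow_mul_integral_Ioi_sub_le hf hα h one_pos).mono fun _ hw => hw.1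

lemma tendsto_rpow_mul_integral_Ioi (hf : Measurable f) (hα : 1 < α)
    (h : Tendsto (fun t => t ^ α * f t) atTop (𝓝 K)) :
    Tendsto (fun w => w ^ (α - 1) * ∫ t in Ioi w, f t) atTop (𝓝 (K / (α - 1))) := by
  have hα1 : 0 < α - 1 := sub_pos.2 hα
  refine Metric.tendsto_nhds.2 fun ε hε => ?_
  filter_upwards [eventually_abs_rpow_mul_integral_Ioi_sub_le hf hα h
    (by positivity : 0 < ε * (α - 1) / 2)] with w hw
  rw [Real.dist_eq]
  calc _ ≤ ε * (α - 1) / 2 / (α - 1) := hw.2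
    _ < ε := by rw [div_right_comm, mul_div_cancel_right₀ _ hα1.ne']; linarith

lemma tendsto_integral_Ioi_div_mul_self (hf : Measurable f) (hα : 1 < α) (hK : K ≠ 0)
    (h : Tendsto (fun t => t ^ α * f t) atTop (𝓝 K)) :
    Tendsto (fun w => (∫ t in Ioi w, f t) / (w * f w)) atTop (𝓝 (1 / (α - 1))) := by
  have hlim : K / (α - 1) / K = 1 / (α - 1) := by field_simp
  refine hlim ▸ ((tendsto_rpow_mul_integral_Ioi hf hα h).div h hK).congr' ?_
  filter_upwards [eventually_gt_atTop 0] with w hw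
  have hsplit : w ^ α = w ^ (α - 1) * w := by rw [← Real.rpow_add_one hw.ne', sub_add_cancel]
  simp only [Pi.div_apply]
  rw [hsplit, mul_assoc, mul_div_mul_left _ _ (Real.rpow_pos_of_pos hw _).ne']

end TailIntegral

section TailExpectation

variable {Ω : Type*} [MeasurableSpace Ω] {X : Ω → ℝ}

lemma setLIntegral_gt_ofReal_sub (μ : Measure Ω) (hX : Measurable X) (w : ℝ) :
    ∫⁻ ω in {ω | X ω > w}, ENNReal.ofReal (X ω - w) ∂μ = ∫⁻ t in Ioi w, μ {ω | X ω > t} := by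
  have hS : MeasurableSet {ω | X ω > w} := measurableSet_lt measurable_const hX
  have hnn : 0 ≤ᵐ[μ.restrict {ω | X ω > w}] fun ω => X ω - w :=
    (ae_restrict_iff' hS).2 (Eventually.of_forall fun ω (hω : w < X ω) => sub_nonneg.2 hω.le)
  rw [lintegral_eq_lintegral_meas_lt _ hnn (hX.sub_const w).aemeasurable]
  have hshift := (measurePreserving_add_left volume w).setLIntegral_comp_emb
    (measurableEmbedding_addLeft w) (fun t => μ {ω | X ω > t}) (Ioi 0)
  rw [image_const_add_Ioi, add_zero] at hshift
  rw [← hshift]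
  refine setLIntegral_congr_fun measurableSet_Ioi fun t (ht : 0 < t) => ?_
  rw [Measure.restrict_apply (measurableSet_lt measurable_const (hX.sub_const w))]
  congr 1
  ext ω
  simp only [mem_inter_iff, mem_ofPred_eq]
  exact ⟨fun h => by linarith [h.1], fun h => ⟨by linarith, by linarith⟩⟩

lemma setIntegral_gt_eq_mul_add_integral_Ioi (μ : Measure Ω) [IsFiniteMeasure μ]
    (hX : Measurable X) {w : ℝ}
    (hint : IntegrableOn (fun t => (μ {ω | X ω > t}).toReal) (Ioi w)) :
    ∫ ω in {ω | X ω > w}, X ω ∂μ =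
      w * (μ {ω | X ω > w}).toReal + ∫ t in Ioi w, (μ {ω | X ω > t}).toReal := by
  have hS : MeasurableSet {ω | X ω > w} := measurableSet_lt measurable_const hX
  have hnn : 0 ≤ᵐ[μ.restrict {ω | X ω > w}] fun ω => X ω - w :=
    (ae_restrict_iff' hS).2 (Eventually.of_forall fun ω (hω : w < X ω) => sub_nonneg.2 hω.le)
  have htail_meas : Measurable fun t => μ {ω | X ω > t} :=
    Antitone.measurable fun s t hst => measure_mono fun ω (hω : t < X ω) => hst.trans_lt hω
  have hfin : ∫⁻ t in Ioi w, μ {ω | X ω > t} < ⊤ := by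
    simpa only [ENNReal.ofReal_toReal (measure_ne_top μ _)] using hint.lintegral_lt_top
  have hexcess : ∫ ω in {ω | X ω > w}, X ω - w ∂μ = ∫ t in Ioi w, (μ {ω | X ω > t}).toReal := by
    rw [integral_eq_lintegral_of_nonneg_ae hnn (hX.sub_const w).aestronglyMeasurable,
      setLIntegral_gt_ofReal_sub μ hX w,
      integral_toReal htail_meas.aemeasurable (Eventually.of_forall fun _ => measure_lt_top μ _)]
  have hexcess_int : IntegrableOn (fun ω => X ω - w) {ω | X ω > w} μ :=
    ⟨(hX.sub_const w).aestronglyMeasurable, (hasFiniteIntegral_iff_ofReal hnn).2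
      (setLIntegral_gt_ofReal_sub μ hX w ▸ hfin)⟩
  calc ∫ ω in {ω | X ω > w}, X ω ∂μ = ∫ ω in {ω | X ω > w}, ((X ω - w) + w) ∂μ := by
        simp only [sub_add_cancel]
    _ = _ := by
      rw [integral_add hexcess_int (integrableOn_const (measure_ne_top μ _)), hexcess,
        setIntegral_const, smul_eq_mul, measureReal_def, add_comm, mul_comm]

end TailExpectation

theorem cote_asymptotics_pareto_tail_general
    {Ω : Type*} [MeasurableSpace Ω] (ℙ : Measure Ω) [IsProbabilityMeasure ℙ]
    (X : Ω → ℝ) (hXmeas : Measurable X)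
    (K α : ℝ) (hK : 0 < K) (hα : 1 < α)
    (htail : Tendsto (fun t : ℝ => t ^ α * (ℙ {ω | X ω > t}).toReal)
      atTop (nhds K)) :
    Tendsto (fun γ : ℝ => γ ^ (1 / α) * CoTE ℙ X γ)
      (nhdsWithin 0 (Ioi 0)) (nhds (α / (α - 1) * K ^ (1 / α))) := by
  set F : ℝ → ℝ := fun t => (ℙ {ω | X ω > t}).toReal
  have hF : Antitone F := fun s t hst =>
    ENNReal.toReal_mono (measure_ne_top _ _) (measure_mono fun ω (hω : t < X ω) => hst.trans_lt hω)
  have hα0 : 0 < α := one_pos.trans hα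
  have hv := tailQuantile.tendsto_rpow_mul hF hK hα0 htail
  have hvtop := tailQuantile.tendsto_atTop hF hK hα0 htail
  have hratio := (tendsto_integral_Ioi_div_mul_self hF.measurable hα hK.ne' htail).comp hvtop
  have hFpos : ∀ᶠ t in atTop, 0 < F t := by
    filter_upwards [htail.eventually_const_lt hK, eventually_gt_atTop 0] with t ht ht0
    exact pos_of_mul_pos_right ht (Real.rpow_nonneg ht0.le α)
  have hlim : K ^ (1 / α) * (1 + 1 / (α - 1)) = α / (α - 1) * K ^ (1 / α) := by
    field_simp [(sub_pos.2 hα).ne']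
    ring
  rw [← hlim]
  refine (hv.mul (tendsto_const_nhds.add hratio)).congr' ?_
  filter_upwards [hvtop.eventually (eventually_integrableOn_Ioi hF.measurable hα htail),
    hvtop.eventually hFpos, hvtop.eventually_gt_atTop 0] with γ hint hpos hv0
  change _ = γ ^ (1 / α) *
    ((∫ ω in {ω | X ω > tailQuantile F γ}, X ω ∂ℙ) / F (tailQuantile F γ))
  rw [Function.comp_apply, setIntegral_gt_eq_mul_add_integral_Ioi ℙ hXmeas hint]
  field_simp
  rfl

/-- If `P(X > t) ~ K t^{-α}` with `α > 1`, then
`CoTE_{1-γ}(X) ~ (α/(α-1)) K^{1/α} γ^{-1/α}` as `γ → 0`. -/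
theorem cote_asymptotics_pareto_tail
    {Ω : Type*} [MeasurableSpace Ω] (ℙ : Measure Ω) [IsProbabilityMeasure ℙ]
    (X : Ω → ℝ) (hXmeas : Measurable X) (hX : ∀ ω, 0 ≤ X ω)
    (K α : ℝ) (hK : 0 < K) (hα : 1 < α)
    (htail : Tendsto (fun t : ℝ => t ^ α * (ℙ {ω | X ω > t}).toReal)
      atTop (nhds K)) :
    Tendsto (fun γ : ℝ => γ ^ (1 / α) * CoTE ℙ X γ)
      (nhdsWithin 0 (Ioi 0)) (nhds (α / (α - 1) * K ^ (1 / α))) :=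
  cote_asymptotics_pareto_tail_general ℙ X hXmeas K α hK hα htail
end

section
/- Let X ≥ 0 with P(X > t) ~ K t^{-α} and let Y ≥ 0 be independent of X with E[Y^{α+δ}] < ∞ for some δ > 0. Then P(YX > t) ~ K E[Y^α] t^{-α} as t → ∞ (Breiman's lemma with exact Pareto-like constants). -/
open MeasureTheory Filter Set ProbabilityTheory

/-- Breiman's lemma with exact Pareto-like constants: if `X ≥ 0` has
`P(X > t) ~ K t^{-α}` and `Y ≥ 0` is independent of `X` with
`E[Y^{α+δ}] < ∞` for some `δ > 0`, then
`P(YX > t) ~ K E[Y^α] t^{-α}` as `t → ∞`. -/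
theorem breiman_pareto
    {Ω : Type*} [MeasurableSpace Ω] (μ : Measure Ω) [IsProbabilityMeasure μ]
    (X Y : Ω → ℝ) (hXmeas : Measurable X) (hYmeas : Measurable Y)
    (hXpos : ∀ ω, 0 ≤ X ω) (hYpos : ∀ ω, 0 ≤ Y ω)
    (hindep : IndepFun X Y μ)
    (K α δ : ℝ) (hK : 0 < K) (hα : 0 < α) (hδ : 0 < δ)
    (hmom : Integrable (fun ω => Y ω ^ (α + δ)) μ)
    (htail : Tendsto (fun t : ℝ => t ^ α * (μ {ω | X ω > t}).toReal)
      atTop (nhds K)) :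
    Tendsto (fun t : ℝ => t ^ α * (μ {ω | Y ω * X ω > t}).toReal)
      atTop (nhds (K * ∫ ω, Y ω ^ α ∂μ)) := by
  set νX := μ.map X with hνXdef
  set ν := μ.map Y with hνdef
  have hprobX : IsProbabilityMeasure νX := Measure.isProbabilityMeasure_map hXmeas.aemeasurable
  have hprobY : IsProbabilityMeasure ν := Measure.isProbabilityMeasure_map hYmeas.aemeasurable
  -- tail function of X
  set g : ℝ → ℝ := fun s => s ^ α * (νX {x | x > s}).toReal with hgdef
  have htail' : Tendsto g atTop (nhds K) := by
    refine htail.congr fun t => ?_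
    have h : μ {ω | X ω > t} = νX {x | x > t} := by
      have hms : MeasurableSet {x : ℝ | x > t} := measurableSet_Ioi
      rw [hνXdef, Measure.map_apply hXmeas hms]
      rfl
    simp only [hgdef, h]
  -- product structure from independence
  have hset : ∀ t : ℝ, MeasurableSet {p : ℝ × ℝ | p.1 * p.2 > t} := fun t =>
    measurableSet_lt measurable_const (measurable_fst.mul measurable_snd)
  have hmap : μ.map (fun ω => (Y ω, X ω)) = ν.prod νX :=
    (indepFun_iff_map_prod_eq_prod_map_map hYmeas.aemeasurable hXmeas.aemeasurable).mp
      hindep.symm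
  have key : ∀ t : ℝ, μ {ω | Y ω * X ω > t} = ∫⁻ y, νX {x | y * x > t} ∂ν := by
    intro t
    have h1 : μ {ω | Y ω * X ω > t}
        = μ.map (fun ω => (Y ω, X ω)) {p : ℝ × ℝ | p.1 * p.2 > t} := by
      rw [Measure.map_apply (hYmeas.prodMk hXmeas) (hset t)]
      rfl
    rw [h1, hmap, Measure.prod_apply (hset t)]
    rfl
  have hm : ∀ t : ℝ, Measurable fun y => νX {x | y * x > t} := fun t =>
    measurable_measure_prodMk_left (hset t)
  -- F t y := t^α * P(y X > t)
  set F : ℝ → ℝ → ℝ := fun t y => t ^ α * (νX {x | y * x > t}).toReal with hFdef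
  have hFg : ∀ t : ℝ, 0 < t → ∀ y : ℝ, 0 < y → F t y = y ^ α * g (t / y) := by
    intro t ht y hy
    have hsets : {x : ℝ | y * x > t} = {x : ℝ | x > t / y} := by
      ext x
      simp only [mem_setOf_eq, gt_iff_lt, div_lt_iff₀ hy, mul_comm]
    have hrpow : (t / y) ^ α = t ^ α / y ^ α := Real.div_rpow ht.le hy.le α
    have hy0 : y ^ α ≠ 0 := (Real.rpow_pos_of_pos hy α).ne'
    simp only [hFdef, hgdef, hsets, hrpow]
    field_simp
  -- uniform tail bound
  obtain ⟨t1, ht1⟩ := eventually_atTop.mp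
    (htail'.eventually (eventually_le_nhds (lt_add_one K)))
  set t0 : ℝ := max t1 1 with ht0def
  have ht0pos : (0 : ℝ) < t0 := lt_of_lt_of_le one_pos (le_max_right _ _)
  set C : ℝ := max (K + 1) (t0 ^ α) with hCdef
  have hCpos : 0 < C := lt_of_lt_of_le (by linarith) (le_max_left _ _)
  have hgbound : ∀ s : ℝ, 0 ≤ s → g s ≤ C := by
    intro s hs
    rcases le_total s t0 with h | h
    · refine le_trans ?_ (le_max_right (K + 1) (t0 ^ α))
      have h1 : (νX {x | x > s}).toReal ≤ 1 := by
        have := ENNReal.toReal_mono (by simp) (prob_le_one (μ := νX) (s := {x | x > s}))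
        simpa using this
      calc g s ≤ s ^ α * 1 :=
            mul_le_mul_of_nonneg_left h1 (Real.rpow_nonneg hs α)
        _ = s ^ α := mul_one _
        _ ≤ t0 ^ α := Real.rpow_le_rpow hs h hα.le
    · exact le_trans (ht1 s (le_trans (le_max_left _ _) h)) (le_max_left _ _)
  -- almost everywhere nonneg under ν
  have haepos : ∀ᵐ y ∂ν, 0 ≤ y := by
    rw [hνdef]
    exact (ae_map_iff hYmeas.aemeasurable measurableSet_Ici).mpr (ae_of_all _ hYpos)
  -- dominating function
  set bound : ℝ → ℝ := fun y => C * (1 + y ^ (α + δ)) with hbounddef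
  have hboundint : Integrable bound ν := by
    have h1 : Integrable (fun y : ℝ => y ^ (α + δ)) ν := by
      rw [hνdef]
      refine (integrable_map_measure ?_ hYmeas.aemeasurable).mpr hmom
      exact (by fun_prop : Measurable fun y : ℝ => y ^ (α + δ)).aestronglyMeasurable
    exact ((integrable_const (1 : ℝ)).add h1).const_mul C
  -- dominated convergence
  have hDCT : Tendsto (fun t => ∫ y, F t y ∂ν) atTop (nhds (∫ y, K * y ^ α ∂ν)) := by
    refine tendsto_integral_filter_of_dominated_convergence bound ?_ ?_ hboundint ?_
    · exact Eventually.of_forall fun t =>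
        (((hm t).ennreal_toReal).const_mul _).aestronglyMeasurable
    · filter_upwards [eventually_ge_atTop (1 : ℝ)] with t ht
      filter_upwards [haepos] with y hy
      have htpos : (0 : ℝ) < t := lt_of_lt_of_le one_pos ht
      have hFnn : 0 ≤ F t y :=
        mul_nonneg (Real.rpow_nonneg htpos.le α) ENNReal.toReal_nonneg
      rw [Real.norm_of_nonneg hFnn]
      have hboundnn : 0 ≤ bound y :=
        mul_nonneg hCpos.le (by positivity)
      rcases eq_or_lt_of_le hy with hy0 | hy0
      · have hempty : {x : ℝ | y * x > t} = (∅ : Set ℝ) := by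
          ext x
          simp only [mem_setOf_eq, mem_empty_iff_false, iff_false, not_lt, ← hy0, zero_mul]
          exact htpos.le
        simp only [hFdef, hempty]
        simpa using hboundnn
      · rw [hFg t htpos y hy0]
        have h1 : g (t / y) ≤ C := hgbound _ (div_nonneg htpos.le hy0.le)
        have h2 : y ^ α ≤ 1 + y ^ (α + δ) := by
          rcases le_total y 1 with h | h
          · have : y ^ α ≤ 1 := Real.rpow_le_one hy0.le h hα.le
            have : (0:ℝ) ≤ y ^ (α + δ) := Real.rpow_nonneg hy0.le _
            linarith [Real.rpow_le_one hy0.le h hα.le]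
          · have : y ^ α ≤ y ^ (α + δ) :=
              Real.rpow_le_rpow_of_exponent_le h (by linarith)
            linarith
        calc y ^ α * g (t / y) ≤ y ^ α * C :=
              mul_le_mul_of_nonneg_left h1 (Real.rpow_nonneg hy0.le α)
          _ ≤ (1 + y ^ (α + δ)) * C := by
              exact mul_le_mul_of_nonneg_right h2 hCpos.le
          _ = bound y := by rw [hbounddef]; ring
    · filter_upwards [haepos] with y hy
      rcases eq_or_lt_of_le hy with hy0 | hy0
      · have hlim0 : K * y ^ α = 0 := by
          rw [← hy0, Real.zero_rpow hα.ne', mul_zero]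
        rw [hlim0]
        have : ∀ᶠ t in atTop, F t y = 0 := by
          filter_upwards [eventually_gt_atTop (0 : ℝ)] with t ht
          have hempty : {x : ℝ | y * x > t} = (∅ : Set ℝ) := by
            ext x
            simp only [mem_setOf_eq, mem_empty_iff_false, iff_false, not_lt, ← hy0, zero_mul]
            exact ht.le
          simp [hFdef, hempty]
        exact Tendsto.congr' (this.mono fun t h => h.symm) tendsto_const_nhds
      · have hdiv : Tendsto (fun t : ℝ => t / y) atTop atTop :=
          tendsto_id.atTop_div_const hy0
        have hcomp : Tendsto (fun t : ℝ => y ^ α * g (t / y)) atTop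
            (nhds (y ^ α * K)) := (htail'.comp hdiv).const_mul _
        rw [mul_comm K (y ^ α)]
        refine Tendsto.congr' ?_ hcomp
        filter_upwards [eventually_gt_atTop (0 : ℝ)] with t ht
        exact (hFg t ht y hy0).symm
  -- assemble
  have heq : ∀ t : ℝ, t ^ α * (μ {ω | Y ω * X ω > t}).toReal = ∫ y, F t y ∂ν := by
    intro t
    rw [key t, hFdef]
    rw [MeasureTheory.integral_const_mul]
    congr 1
    rw [integral_toReal (hm t).aemeasurable (ae_of_all _ fun y => measure_lt_top _ _)]
  have hval : ∫ y, K * y ^ α ∂ν = K * ∫ ω, Y ω ^ α ∂μ := by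
    rw [MeasureTheory.integral_const_mul]
    congr 1
    rw [hνdef, integral_map hYmeas.aemeasurable
      ((by fun_prop : Measurable fun y : ℝ => y ^ α).aestronglyMeasurable)]
  rw [← hval]
  exact hDCT.congr fun t => (heq t).symm
end

section
/- Karamata-type tail integral: if X ≥ 0 satisfies P(X > t) ~ K t^{-α} with α > 1, then ∫_u^∞ P(X > t) dt ~ (K/(α-1)) u^{1-α} as u → ∞, and consequently E[X 1{X > u}] = u P(X > u) + ∫_u^∞ P(X > t) dt ~ (α/(α-1)) K u^{1-α}. -/
open MeasureTheory Filter Set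

/-- Karamata-type tail integral: if `X ≥ 0` satisfies `P(X > t) ~ K t^{-α}`
with `α > 1`, then `∫_u^∞ P(X > t) dt ~ (K/(α-1)) u^{1-α}` as `u → ∞`, and
consequently `E[X 1{X > u}] ~ (α/(α-1)) K u^{1-α}`. -/
theorem karamata_tail_integral
    {Ω : Type*} [MeasurableSpace Ω] (μ : Measure Ω) [IsProbabilityMeasure μ]
    (X : Ω → ℝ) (hXmeas : Measurable X) (hXpos : ∀ ω, 0 ≤ X ω)
    (K α : ℝ) (hK : 0 < K) (hα : 1 < α)
    (htail : Tendsto (fun t : ℝ => t ^ α * (μ {ω | X ω > t}).toReal)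
      atTop (nhds K)) :
    Tendsto (fun u : ℝ => u ^ (α - 1) * ∫ t in Ioi u, (μ {ω | X ω > t}).toReal)
        atTop (nhds (K / (α - 1)))
    ∧ Tendsto (fun u : ℝ => u ^ (α - 1) * ∫ ω in {ω | X ω > u}, X ω ∂μ)
        atTop (nhds (α * K / (α - 1))) := by
  have hα0 : (0:ℝ) < α - 1 := by linarith
  have hαne : α - 1 ≠ 0 := ne_of_gt hα0
  set G : ℝ → ENNReal := fun t => μ {ω | X ω > t} with hGdef
  set F : ℝ → ℝ := fun t => (G t).toReal with hFdef
  have hGne : ∀ t, G t ≠ ⊤ := fun t => measure_ne_top μ _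
  have hGanti : Antitone G := fun s t hst =>
    measure_mono fun ω (h : t < X ω) => lt_of_le_of_lt hst h
  have hGmeas : Measurable G := hGanti.measurable
  have hFanti : Antitone F := fun s t hst => ENNReal.toReal_mono (hGne s) (hGanti hst)
  have hFmeas : Measurable F := hFanti.measurable
  have hFnonneg : ∀ t, 0 ≤ F t := fun t => ENNReal.toReal_nonneg
  -- tail bounds
  have key : ∀ δ > (0:ℝ), ∃ T ≥ (1:ℝ), ∀ t ≥ T,
      F t ≤ (K + δ) * t ^ (-α) ∧ (K - δ) * t ^ (-α) ≤ F t := by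
    intro δ hδ
    have h1 := Metric.tendsto_nhds.mp htail δ hδ
    rw [eventually_atTop] at h1
    obtain ⟨T, hT⟩ := h1
    refine ⟨max T 1, le_max_right _ _, fun t ht => ?_⟩
    have ht1 : (1:ℝ) ≤ t := le_trans (le_max_right T 1) ht
    have ht0 : (0:ℝ) < t := lt_of_lt_of_le one_pos ht1
    have htα : (0:ℝ) < t ^ α := Real.rpow_pos_of_pos ht0 α
    have hd := hT t (le_trans (le_max_left T 1) ht)
    rw [Real.dist_eq, abs_lt] at hd
    have hrw : t ^ (-α) = (t ^ α)⁻¹ := Real.rpow_neg ht0.le α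
    have hcomm : t ^ α * F t = F t * t ^ α := mul_comm _ _
    constructor
    · rw [hrw, mul_comm (K + δ), inv_mul_eq_div, le_div_iff₀ htα]
      linarith [hd.2]
    · rw [hrw, mul_comm (K - δ), inv_mul_eq_div, div_le_iff₀ htα]
      linarith [hd.1]
  have hbound_int : ∀ (c u : ℝ), 0 < u →
      IntegrableOn (fun t => c * t ^ (-α)) (Ioi u) := fun c u hu =>
    (integrableOn_Ioi_rpow_of_lt (by linarith : -α < -1) hu).const_mul c
  obtain ⟨T₀, hT₀1, hT₀⟩ := key 1 one_pos
  have hFint : ∀ u, T₀ ≤ u → IntegrableOn F (Ioi u) := by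
    intro u hu
    have hu0 : 0 < u := lt_of_lt_of_le one_pos (hT₀1.trans hu)
    refine (hbound_int (K + 1) u hu0).mono' hFmeas.aestronglyMeasurable.restrict ?_
    filter_upwards [ae_restrict_mem measurableSet_Ioi] with t ht
    rw [Real.norm_eq_abs, abs_of_nonneg (hFnonneg t)]
    exact (hT₀ t (hu.trans ht.le)).1
  have hint : ∀ u : ℝ, 0 < u → ∫ t in Ioi u, t ^ (-α) = u ^ (1 - α) / (α - 1) := by
    intro u hu
    rw [integral_Ioi_rpow_of_lt (by linarith) hu,
      show (-α + 1 : ℝ) = 1 - α from by ring]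
    generalize u ^ (1 - α : ℝ) = v
    have h1α : (1 - α : ℝ) ≠ 0 := by intro h; apply hαne; linarith
    field_simp
    ring
  -- Part 1
  have h1 : Tendsto (fun u : ℝ => u ^ (α - 1) * ∫ t in Ioi u, F t)
      atTop (nhds (K / (α - 1))) := by
    rw [Metric.tendsto_nhds]
    intro ε hε
    set δ := ε * (α - 1) / 2 with hδdef
    have hδ : 0 < δ := by positivity
    obtain ⟨T, hT1, hT⟩ := key δ hδ
    rw [eventually_atTop]
    refine ⟨max T T₀, fun u hu => ?_⟩
    have huT : T ≤ u := le_trans (le_max_left _ _) hu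
    have huT₀ : T₀ ≤ u := le_trans (le_max_right _ _) hu
    have hu0 : 0 < u := lt_of_lt_of_le one_pos (hT1.trans huT)
    have hFi : IntegrableOn F (Ioi u) := hFint u huT₀
    have hpow : u ^ (α - 1) * u ^ (1 - α) = 1 := by
      rw [← Real.rpow_add hu0, show (α - 1) + (1 - α) = (0:ℝ) from by ring,
        Real.rpow_zero]
    have hEq : ∀ c : ℝ, u ^ (α - 1) * (c * (u ^ (1 - α) / (α - 1))) = c / (α - 1) := by
      intro c
      have : u ^ (α - 1) * (c * (u ^ (1 - α) / (α - 1)))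
          = (u ^ (α - 1) * u ^ (1 - α)) * c / (α - 1) := by ring
      rw [this, hpow, one_mul]
    have hupper : ∫ t in Ioi u, F t ≤ (K + δ) * (u ^ (1 - α) / (α - 1)) := by
      rw [← hint u hu0, ← integral_const_mul]
      exact setIntegral_mono_on hFi (hbound_int (K + δ) u hu0) measurableSet_Ioi
        fun t ht => (hT t (huT.trans ht.le)).1
    have hlower : (K - δ) * (u ^ (1 - α) / (α - 1)) ≤ ∫ t in Ioi u, F t := by
      rw [← hint u hu0, ← integral_const_mul]
      exact setIntegral_mono_on (hbound_int (K - δ) u hu0) hFi measurableSet_Ioi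
        fun t ht => (hT t (huT.trans ht.le)).2
    have hupos : 0 ≤ u ^ (α - 1) := (Real.rpow_pos_of_pos hu0 _).le
    have hA : u ^ (α - 1) * ∫ t in Ioi u, F t ≤ (K + δ) / (α - 1) := by
      rw [← hEq (K + δ)]
      exact mul_le_mul_of_nonneg_left hupper hupos
    have hB : (K - δ) / (α - 1) ≤ u ^ (α - 1) * ∫ t in Ioi u, F t := by
      rw [← hEq (K - δ)]
      exact mul_le_mul_of_nonneg_left hlower hupos
    rw [Real.dist_eq, abs_lt]
    have e0 : δ / (α - 1) = ε / 2 := by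
      rw [hδdef, div_eq_div_iff hαne two_ne_zero]
      ring
    have e1 : (K + δ) / (α - 1) = K / (α - 1) + ε / 2 := by rw [add_div, e0]
    have e2 : (K - δ) / (α - 1) = K / (α - 1) - ε / 2 := by rw [sub_div, e0]
    constructor <;> [linarith [hB]; linarith [hA]]
  -- identity E[X 1{X>u}] = u P(X>u) + ∫_u^∞ P(X>t)dt
  have hident : ∀ u : ℝ, T₀ ≤ u →
      ∫ ω in {ω | X ω > u}, X ω ∂μ = u * F u + ∫ t in Ioi u, F t := by
    intro u hu
    have hu0 : 0 < u := lt_of_lt_of_le one_pos (hT₀1.trans hu)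
    set s : Set Ω := {ω | X ω > u} with hs
    have hsmeas : MeasurableSet s := measurableSet_lt measurable_const hXmeas
    set Y : Ω → ℝ := s.indicator X with hY
    have hYmeas : Measurable Y := hXmeas.indicator hsmeas
    have hYnn : ∀ ω, 0 ≤ Y ω := fun ω => indicator_nonneg (fun ω _ => hXpos ω) ω
    have step1 : ∫ ω in s, X ω ∂μ = ∫ ω, Y ω ∂μ := (integral_indicator hsmeas).symm
    have step2 : ∫ ω, Y ω ∂μ = (∫⁻ ω, ENNReal.ofReal (Y ω) ∂μ).toReal :=
      integral_eq_lintegral_of_nonneg_ae (ae_of_all _ hYnn)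
        hYmeas.aestronglyMeasurable
    have step3 : ∫⁻ ω, ENNReal.ofReal (Y ω) ∂μ = ∫⁻ t in Ioi (0:ℝ), μ {ω | t < Y ω} :=
      lintegral_eq_lintegral_meas_lt μ (ae_of_all _ hYnn) hYmeas.aemeasurable
    have hset1 : ∀ t ∈ Ioc (0:ℝ) u, μ {ω | t < Y ω} = G u := by
      intro t ht
      congr 1
      ext ω
      simp only [mem_setOf_eq, hY, indicator_apply]
      by_cases hc : ω ∈ s
      · rw [if_pos hc]
        exact ⟨fun _ => hc, fun h => lt_of_le_of_lt ht.2 h⟩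
      · rw [if_neg hc]
        exact ⟨fun h => absurd h (not_lt.2 ht.1.le), fun h => absurd h hc⟩
    have hset2 : ∀ t ∈ Ioi u, μ {ω | t < Y ω} = G t := by
      intro t ht
      congr 1
      ext ω
      simp only [mem_setOf_eq, hY, indicator_apply]
      by_cases hc : ω ∈ s
      · rw [if_pos hc]
      · rw [if_neg hc]
        exact ⟨fun h => absurd h (not_lt.2 (lt_trans hu0 ht).le),
          fun h => absurd (lt_trans ht h) hc⟩
    have split : ∫⁻ t in Ioi (0:ℝ), μ {ω | t < Y ω}
        = G u * ENNReal.ofReal u + ∫⁻ t in Ioi u, G t := by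
      rw [← Ioc_union_Ioi_eq_Ioi hu0.le,
        lintegral_union measurableSet_Ioi Ioc_disjoint_Ioi_same]
      congr 1
      · rw [setLIntegral_congr_fun measurableSet_Ioc hset1,
          setLIntegral_const, Real.volume_Ioc, sub_zero]
      · exact setLIntegral_congr_fun measurableSet_Ioi hset2
    have hLfin : (∫⁻ t in Ioi u, G t) ≠ ⊤ := by
      have hFi := hFint u hu
      have hGF : (∫⁻ t in Ioi u, G t) = ∫⁻ t in Ioi u, ENNReal.ofReal (F t) := by
        refine lintegral_congr fun t => ?_
        exact (ENNReal.ofReal_toReal (hGne t)).symm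
      rw [hGF]
      exact hFi.lintegral_lt_top.ne
    have step4 : (G u * ENNReal.ofReal u + ∫⁻ t in Ioi u, G t).toReal
        = u * F u + ∫ t in Ioi u, F t := by
      rw [ENNReal.toReal_add (ENNReal.mul_ne_top (hGne u) ENNReal.ofReal_ne_top) hLfin,
        ENNReal.toReal_mul, ENNReal.toReal_ofReal hu0.le]
      congr 1
      · exact mul_comm _ _
      · exact (integral_toReal hGmeas.aemeasurable.restrict
          (ae_of_all _ fun t => measure_lt_top μ _)).symm
    calc ∫ ω in s, X ω ∂μ
        = (G u * ENNReal.ofReal u + ∫⁻ t in Ioi u, G t).toReal := by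
          rw [step1, step2, step3, split]
      _ = u * F u + ∫ t in Ioi u, F t := step4
  -- Part 2
  have h2 : Tendsto (fun u : ℝ => u ^ (α - 1) * ∫ ω in {ω | X ω > u}, X ω ∂μ)
      atTop (nhds (α * K / (α - 1))) := by
    have heq : (fun u : ℝ => u ^ α * F u + u ^ (α - 1) * ∫ t in Ioi u, F t)
        =ᶠ[atTop] fun u : ℝ => u ^ (α - 1) * ∫ ω in {ω | X ω > u}, X ω ∂μ := by
      filter_upwards [eventually_ge_atTop T₀] with u hu
      have hu0 : 0 < u := lt_of_lt_of_le one_pos (hT₀1.trans hu)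
      rw [hident u hu, mul_add]
      congr 1
      have hpow : u ^ (α - 1) * u = u ^ α := by
        rw [← Real.rpow_add_one hu0.ne' (α - 1), sub_add_cancel]
      rw [← mul_assoc, hpow]
    have hadd : Tendsto (fun u : ℝ => u ^ α * F u + u ^ (α - 1) * ∫ t in Ioi u, F t)
        atTop (nhds (K + K / (α - 1))) := htail.add h1
    have hval : K + K / (α - 1) = α * K / (α - 1) := by field_simp; ring
    rw [← hval]
    exact hadd.congr' heq
  exact ⟨h1, h2⟩
end

section
/- If X ∈ ℝ₊^d is multivariate regularly varying with index α and exponent measure ν (i.e. t P(X/t^{1/α} ∈ ·) converges vaguely to ν), and h: ℝ₊^d → ℝ₊ is continuous and positively 1-homogeneous with h not ν-a.e. zero on {x : h(x) > 1} having ν-null boundary, then lim_{t→∞} t^α P(h(X) > t) = ν({x : h(x) > 1}); moreover ν({x : h(x) > u}) = u^{-α} ν({x : h(x) > 1}) for all u > 0 by homogeneity of ν. -/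
open MeasureTheory Filter Set Topology

/-- Continuous-mapping step for multivariate regular variation: if `X ∈ ℝ₊^d`
is multivariate regularly varying with index `α` and exponent measure `ν`
(`t P(X/t^{1/α} ∈ B) → ν(B)` for measurable `B` bounded away from `0` with
`ν`-null boundary), `ν` is homogeneous of order `-α`, and `h` is continuous,
nonnegative and positively 1-homogeneous with `{h > 1}` bounded away from the
origin and with `ν`-null boundary, then
`lim_{t→∞} t^α P(h(X) > t) = ν({h > 1})`; moreover
`ν({h > u}) = u^{-α} ν({h > 1})` for all `u > 0`. -/
theorem mrv_tail_of_homogeneous_map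
    {Ω : Type*} [MeasurableSpace Ω] (μ : Measure Ω) [IsProbabilityMeasure μ]
    (d : ℕ) (α : ℝ) (hα : 0 < α)
    (X : Ω → (Fin d → ℝ)) (hXmeas : Measurable X) (hXpos : ∀ ω j, 0 ≤ X ω j)
    (ν : Measure (Fin d → ℝ))
    (hν_hom : ∀ u : ℝ, 0 < u → ∀ B : Set (Fin d → ℝ), MeasurableSet B →
      ν ((u • ·) '' B) = ENNReal.ofReal (u ^ (-α)) * ν B)
    (hconv : ∀ B : Set (Fin d → ℝ), MeasurableSet B →
      (∃ ε > 0, ∀ x ∈ B, ε ≤ ‖x‖) → ν (frontier B) = 0 → ν B < ⊤ →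
      Tendsto (fun t : ℝ => t * (μ {ω | (t ^ (1 / α))⁻¹ • X ω ∈ B}).toReal)
        atTop (nhds (ν B).toReal))
    (h : (Fin d → ℝ) → ℝ) (hcont : Continuous h) (hnn : ∀ x, 0 ≤ h x)
    (hhom : ∀ l : ℝ, 0 < l → ∀ x, h (l • x) = l * h x)
    (hsep : ∃ ε > 0, ∀ x : Fin d → ℝ, h x > 1 → ε ≤ ‖x‖)
    (hbd : ν (frontier {x | h x > 1}) = 0)
    (hfin : ν {x | h x > 1} < ⊤) :
    Tendsto (fun t : ℝ => t ^ α * (μ {ω | h (X ω) > t}).toReal)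
        atTop (nhds (ν {x | h x > 1}).toReal)
    ∧ ∀ u : ℝ, 0 < u →
        ν {x | h x > u} = ENNReal.ofReal (u ^ (-α)) * ν {x | h x > 1} := by
  have hB : MeasurableSet {x : Fin d → ℝ | h x > 1} :=
    (isOpen_lt continuous_const hcont).measurableSet
  obtain ⟨ε, hε, hsep'⟩ := hsep
  constructor
  · have key := hconv _ hB ⟨ε, hε, hsep'⟩ hbd hfin
    have hg : Tendsto (fun s : ℝ => s ^ α) atTop atTop := tendsto_rpow_atTop hα
    refine (key.comp hg).congr' ?_
    filter_upwards [eventually_gt_atTop 0] with s hs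
    have hsa : ((s ^ α) ^ (1 / α)) = s := by
      rw [one_div, Real.rpow_rpow_inv hs.le hα.ne']
    simp only [Function.comp_apply, hsa]
    have hset : {ω | h (s⁻¹ • X ω) > 1} = {ω | h (X ω) > s} := by
      ext ω
      simp only [Set.mem_setOf_eq]
      rw [hhom s⁻¹ (inv_pos.mpr hs), inv_mul_eq_div, gt_iff_lt, lt_div_iff₀ hs, one_mul]
    rw [hset]
  · intro u hu
    have hset : {x : Fin d → ℝ | h x > u} = (u • ·) '' {x : Fin d → ℝ | h x > 1} := by
      ext x
      simp only [Set.mem_image, Set.mem_setOf_eq]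
      constructor
      · intro hx
        refine ⟨u⁻¹ • x, ?_, smul_inv_smul₀ hu.ne' x⟩
        rw [hhom u⁻¹ (inv_pos.mpr hu), inv_mul_eq_div, gt_iff_lt, lt_div_iff₀ hu, one_mul]
        exact hx
      · rintro ⟨y, hy, rfl⟩
        rw [hhom u hu]
        exact (lt_mul_iff_one_lt_right hu).mpr hy
    rw [hset, hν_hom u hu _ hB]
end

section
/- Spectral decomposition integral: let ν be a Radon measure on ℝ₊^d \ {0} homogeneous of order -α (ν(uB) = u^{-α}ν(B)) with ν({x : ‖x‖ > 1}) < ∞, and let Γ̄ be its spectral measure, defined by Γ̄(S) = ν({x : ‖x‖ > 1, x/‖x‖ ∈ S}). Then for any measurable positively 1-homogeneous h: ℝ₊^d → ℝ₊ bounded on the unit sphere, ν({x : h(x) > 1}) = ∫_{𝕊₊} h(s)^α dΓ̄(s) · (1/α) · α = ∫_{𝕊₊} h(s)^α dΓ̄(s). -/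
/-!
Write `x = r • θ` with `r = ∑ j, x j` and `θ = r⁻¹ • x`. Off the `ν`-null complement of the
orthant, homogeneity of `h` turns `{h > 1}` into `{r · h(θ) > 1}`, and homogeneity of `ν` gives
`ν {r > c, θ ∈ S} = c ^ (-α) Γ(S)`. This is the claim when `h(θ)` is constant on `S`; summing over
fibres gives it for simple functions of `θ`, and monotone convergence for all measurable ones.
-/

open MeasureTheory Set
open scoped ENNReal

/-- The image of `ν` under the polar map `x ↦ (r x, θ x)` agrees with `λ_α ⊗ Γ` on the rectangles
`(c, ∞) × S`, where `λ_α (c, ∞) = c ^ (-α)`. -/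
def IsPolarDecomposition {X Y : Type*} [MeasurableSpace X] [MeasurableSpace Y]
    (ν : Measure X) (r : X → ℝ) (θ : X → Y) (α : ℝ) (Γ : Measure Y) : Prop :=
  ∀ c : ℝ, 0 < c → ∀ S : Set Y, MeasurableSet S →
    ν {x | c < r x ∧ θ x ∈ S} = ENNReal.ofReal (c ^ (-α)) * Γ S

namespace IsPolarDecomposition

variable {X Y : Type*} [MeasurableSpace X] [MeasurableSpace Y] {ν : Measure X} {r : X → ℝ}
  {θ : X → Y} {α : ℝ} {Γ : Measure Y}

theorem measure_one_lt_mul_and_mem (hP : IsPolarDecomposition ν r θ α Γ) (hα : 0 < α)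
    {c : ℝ≥0∞} (hc : c ≠ ∞) {S : Set Y} (hS : MeasurableSet S) :
    ν {x | 1 < ENNReal.ofReal (r x) * c ∧ θ x ∈ S} = c ^ α * Γ S := by
  rcases eq_or_ne c 0 with rfl | hc0
  · simp [ENNReal.zero_rpow_of_pos hα]
  have ht : 0 < c.toReal := ENNReal.toReal_pos hc0 hc
  have hlt : ∀ x, 1 < ENNReal.ofReal (r x) * c ↔ c.toReal⁻¹ < r x := fun x => by
    rw [inv_lt_iff_one_lt_mul₀ ht, ← ENNReal.one_lt_ofReal, ENNReal.ofReal_mul' ht.le,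
      ENNReal.ofReal_toReal hc]
  simp_rw [hlt, hP _ (inv_pos.2 ht) S hS, Real.inv_rpow ht.le, Real.rpow_neg ht.le, inv_inv,
    ← ENNReal.ofReal_rpow_of_pos ht, ENNReal.ofReal_toReal hc]

theorem measure_one_lt_mul_simpleFunc (hP : IsPolarDecomposition ν r θ α Γ) (hα : 0 < α)
    (hθ : Measurable θ) (φ : SimpleFunc Y ℝ≥0∞) (hφ : ∀ y, φ y ≠ ∞) :
    ν {x | 1 < ENNReal.ofReal (r x) * φ (θ x)} = ∫⁻ y, φ y ^ α ∂Γ := by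
  set A := {x | 1 < ENNReal.ofReal (r x) * φ (θ x)}
  have hmeas : ∀ c, MeasurableSet ((φ ∘ θ) ⁻¹' {c}) := fun c => hθ (φ.measurableSet_fiber c)
  have hfiber : ∀ c ∈ φ.range, ν.restrict A ((φ ∘ θ) ⁻¹' {c}) = c ^ α * Γ (φ ⁻¹' {c}) := by
    intro c hc
    obtain ⟨y, rfl⟩ := SimpleFunc.mem_range.1 hc
    rw [Measure.restrict_apply (hmeas _),
      ← hP.measure_one_lt_mul_and_mem hα (hφ y) (φ.measurableSet_fiber _)]
    congr 1
    ext x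
    simp only [A, mem_inter_iff, mem_preimage, mem_singleton_iff, mem_ofPred_eq, Function.comp]
    constructor
    · rintro ⟨hx, hA⟩; exact ⟨hx ▸ hA, hx⟩
    · rintro ⟨hA, hx⟩; exact ⟨hx, hx ▸ hA⟩
  calc ν A = ν.restrict A ((φ ∘ θ) ⁻¹' φ.range) := by
        rw [show (φ ∘ θ) ⁻¹' φ.range = univ from
          eq_univ_of_forall fun x => φ.mem_range_self (θ x), Measure.restrict_apply_univ]
    _ = ∑ c ∈ φ.range, c ^ α * Γ (φ ⁻¹' {c}) := by
        rw [← sum_measure_preimage_singleton _ fun c _ => hmeas c]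
        exact Finset.sum_congr rfl hfiber
    _ = ∫⁻ y, φ y ^ α ∂Γ := by
        rw [← SimpleFunc.map_lintegral, ← SimpleFunc.lintegral_eq_lintegral]
        rfl

theorem measure_one_lt_mul_comp (hP : IsPolarDecomposition ν r θ α Γ) (hα : 0 < α)
    (hθ : Measurable θ) {f : Y → ℝ≥0∞} (hf : Measurable f) :
    ν {x | 1 < ENNReal.ofReal (r x) * f (θ x)} = ∫⁻ y, f y ^ α ∂Γ := by
  let φ := SimpleFunc.eapprox f
  have hunion : {x | 1 < ENNReal.ofReal (r x) * f (θ x)}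
      = ⋃ n, {x | 1 < ENNReal.ofReal (r x) * φ n (θ x)} := by
    ext x
    simp only [mem_ofPred_eq, mem_iUnion]
    rw [← SimpleFunc.iSup_eapprox_apply hf, ENNReal.mul_iSup, lt_iSup_iff]
  have hmono : Monotone fun n => {x | 1 < ENNReal.ofReal (r x) * φ n (θ x)} :=
    fun m n hmn x hx => hx.trans_le (mul_le_mul_right (SimpleFunc.monotone_eapprox f hmn _) _)
  have hpow : ∀ y, f y ^ α = ⨆ n, φ n y ^ α := fun y => by
    rw [← SimpleFunc.iSup_eapprox_apply hf y]
    exact (ENNReal.orderIsoRpow α hα).map_iSup _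
  rw [hunion, hmono.measure_iUnion, lintegral_congr hpow, lintegral_iSup]
  · exact iSup_congr fun n =>
      hP.measure_one_lt_mul_simpleFunc hα hθ (φ n) fun y => (SimpleFunc.eapprox_lt_top f n y).ne
  · exact fun n => (φ n).measurable.pow_const α
  · exact fun m n hmn y => ENNReal.rpow_le_rpow (SimpleFunc.monotone_eapprox f hmn y) hα.le

end IsPolarDecomposition

def IsPosHomogeneous {E : Type*} [SMul ℝ E] (f : E → ℝ) : Prop :=
  ∀ c : ℝ, 0 < c → ∀ x, f (c • x) = c * f x

namespace IsPosHomogeneous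

variable {E : Type*} [AddCommGroup E] [Module ℝ E] {f : E → ℝ}

theorem map_zero (hf : IsPosHomogeneous f) : f 0 = 0 := by
  have h2 := hf 2 two_pos 0
  rw [smul_zero] at h2
  linarith

theorem eq_mul_inv_smul (hf : IsPosHomogeneous f) {t : ℝ} (ht : 0 < t) (x : E) :
    f x = t * f (t⁻¹ • x) := by
  rw [← hf t ht, smul_inv_smul₀ ht.ne']

theorem inv_smul_smul (hf : IsPosHomogeneous f) {c : ℝ} (hc : 0 < c) (x : E) :
    (f (c • x))⁻¹ • (c • x) = (f x)⁻¹ • x := by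
  rw [hf c hc, smul_smul, mul_inv, mul_right_comm, inv_mul_cancel₀ hc.ne', one_mul]

theorem image_smul_setOf (hf : IsPosHomogeneous f) {c : ℝ} (hc : 0 < c) (S : Set E) :
    (c • ·) '' {x | 1 < f x ∧ (f x)⁻¹ • x ∈ S} = {x | c < f x ∧ (f x)⁻¹ • x ∈ S} := by
  ext x
  have hx : f x = c * f (c⁻¹ • x) := hf.eq_mul_inv_smul hc x
  rw [image_smul, mem_smul_set_iff_inv_smul_mem₀ hc.ne', mem_ofPred_eq, mem_ofPred_eq,
    ← hf.inv_smul_smul hc, smul_inv_smul₀ hc.ne', hx, lt_mul_iff_one_lt_right hc]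

theorem isPolarDecomposition [MeasurableSpace E] {ν Γ : Measure E} {α : ℝ}
    (hf : IsPosHomogeneous f) (hf_meas : Measurable f) (hθ : Measurable fun x => (f x)⁻¹ • x)
    (hν : ∀ u : ℝ, 0 < u → ∀ B : Set E, MeasurableSet B →
      ν ((u • ·) '' B) = ENNReal.ofReal (u ^ (-α)) * ν B)
    (hΓ : ∀ S : Set E, MeasurableSet S → Γ S = ν {x | 1 < f x ∧ (f x)⁻¹ • x ∈ S}) :
    IsPolarDecomposition ν f (fun x => (f x)⁻¹ • x) α Γ := by
  intro c hc S hS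
  have hB : MeasurableSet {x | 1 < f x ∧ (f x)⁻¹ • x ∈ S} :=
    (measurableSet_lt measurable_const hf_meas).inter (hθ hS)
  rw [← hf.image_smul_setOf hc, hν c hc _ hB, hΓ S hS]

end IsPosHomogeneous

theorem spectral_decomposition_integral_general
    (d : ℕ) (α : ℝ) (hα : 0 < α)
    (ν : Measure (Fin d → ℝ))
    (hν_orthant : ν {x | ¬ ∀ j, 0 ≤ x j} = 0)
    (hν_hom : ∀ u : ℝ, 0 < u → ∀ B : Set (Fin d → ℝ), MeasurableSet B →
      ν ((u • ·) '' B) = ENNReal.ofReal (u ^ (-α)) * ν B)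
    (Γ : Measure (Fin d → ℝ))
    (hΓ : ∀ S : Set (Fin d → ℝ), MeasurableSet S →
      Γ S = ν {x | 1 < (∑ j, x j) ∧ (∑ j, x j)⁻¹ • x ∈ S})
    (h : (Fin d → ℝ) → ℝ) (hmeas : Measurable h) (hnn : ∀ x, 0 ≤ h x)
    (hhom : ∀ l : ℝ, 0 < l → ∀ x, h (l • x) = l * h x) :
    (ν {x | 1 < h x}).toReal = ∫ s, h s ^ α ∂Γ := by
  have hσ : IsPosHomogeneous fun x : Fin d → ℝ => ∑ j, x j := fun c _ x => by
    simp [Finset.mul_sum]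
  have hθ : Measurable fun x : Fin d → ℝ => (∑ j, x j)⁻¹ • x := by fun_prop
  have hP := hσ.isPolarDecomposition (by fun_prop) hθ hν_hom hΓ
  have hpolar : {x | 1 < h x} =ᵐ[ν]
      {x | 1 < ENNReal.ofReal (∑ j, x j) * ENNReal.ofReal (h ((∑ j, x j)⁻¹ • x))} := by
    refine Filter.eventuallyEq_set.2 ?_
    filter_upwards [ae_iff.2 hν_orthant] with x hx
    rcases (Finset.sum_nonneg fun j _ => hx j).eq_or_lt with hzero | hpos
    · obtain rfl : x = 0 := funext fun j =>
        (Finset.sum_eq_zero_iff_of_nonneg fun j _ => hx j).1 hzero.symm j (Finset.mem_univ j)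
      simp [IsPosHomogeneous.map_zero hhom]
    · rw [IsPosHomogeneous.eq_mul_inv_smul hhom hpos x,
        ← ENNReal.ofReal_mul hpos.le, ENNReal.one_lt_ofReal]
  rw [measure_congr hpolar, hP.measure_one_lt_mul_comp hα hθ hmeas.ennreal_ofReal,
    integral_eq_lintegral_of_nonneg_ae (ae_of_all _ fun s => Real.rpow_nonneg (hnn s) α)
      (hmeas.pow_const α).aestronglyMeasurable]
  simp_rw [ENNReal.ofReal_rpow_of_nonneg (hnn _) hα.le]

/-- Spectral decomposition integral: let `ν` be a measure on `ℝ₊^d \ {0}`,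
homogeneous of order `-α`, finite on `{‖x‖₁ > 1}` (sum norm on nonnegative
vectors), concentrated on the nonnegative orthant, and let `Γ̄` be its spectral
measure, `Γ̄(S) = ν({x : ‖x‖₁ > 1, x/‖x‖₁ ∈ S})`. Then for any measurable,
nonnegative, positively 1-homogeneous `h` bounded on the positive unit sphere,
`ν({h > 1}) = ∫_{𝕊₊} h(s)^α dΓ̄(s)`. -/
theorem spectral_decomposition_integral
    (d : ℕ) (α : ℝ) (hα : 0 < α)
    (ν : Measure (Fin d → ℝ))
    (hν_orthant : ν {x | ¬ ∀ j, 0 ≤ x j} = 0)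
    (hν_hom : ∀ u : ℝ, 0 < u → ∀ B : Set (Fin d → ℝ), MeasurableSet B →
      ν ((u • ·) '' B) = ENNReal.ofReal (u ^ (-α)) * ν B)
    (hν_fin : ν {x | 1 < ∑ j, x j} < ⊤)
    (Γ : Measure (Fin d → ℝ)) [IsFiniteMeasure Γ]
    (hΓ : ∀ S : Set (Fin d → ℝ), MeasurableSet S →
      Γ S = ν {x | 1 < (∑ j, x j) ∧ (∑ j, x j)⁻¹ • x ∈ S})
    (h : (Fin d → ℝ) → ℝ) (hmeas : Measurable h) (hnn : ∀ x, 0 ≤ h x)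
    (hhom : ∀ l : ℝ, 0 < l → ∀ x, h (l • x) = l * h x)
    (hbdd : ∃ M : ℝ, ∀ s : Fin d → ℝ, (∀ j, 0 ≤ s j) → (∑ j, s j) = 1 →
      h s ≤ M) :
    (ν {x | 1 < h x}).toReal = ∫ s, h s ^ α ∂Γ :=
  spectral_decomposition_integral_general d α hα ν hν_orthant hν_hom Γ hΓ h hmeas hnn hhom
end
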